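/- There exists an absolute constant C>0 such that for every ψ∈𝔐_∞^+, every β∈ℝ, and every n∈ℕ, the function Ψ_{n,β}(t)=∑_{k=n}^{∞}ψ(2n+k)cos(kt+βπ/2) satisfies ∫_0^{2π}|Ψ_{n,β}(t)|dt ≤ C·ψ(3n)·(1 + ln⁺(η(ψ;n)−n)), where ln⁺x = max{0, ln x}. -/

import Mathlib

open Real MeasureTheory Filter

noncomputable section

/-- `ω` is a modulus of continuity: continuous, nondecreasing, subadditive on `[0,∞)`,
nonnegative, and `ω 0 = 0`. -/
def IsModulus (ω : ℝ → ℝ) : Prop :=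
  ContinuousOn ω (Set.Ici 0) ∧ MonotoneOn ω (Set.Ici 0) ∧
  (∀ s t : ℝ, 0 ≤ s → 0 ≤ t → ω (s + t) ≤ ω s + ω t) ∧ ω 0 = 0 ∧
  ∀ t : ℝ, 0 ≤ t → 0 ≤ ω t

/-- `ψ` belongs to `𝔐_∞^+`, where `η t = ψ⁻¹(ψ t / 2)` (i.e. `η t ≥ t` and
`ψ (η t) = ψ t / 2`) and `μ t = t / (η t − t)` is nondecreasing and tends to `∞`. -/
def IsMInfPlus (ψ η : ℝ → ℝ) : Prop :=
  (∀ t ≥ (1:ℝ), 0 < ψ t) ∧ ContinuousOn ψ (Set.Ici 1) ∧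
  ConvexOn ℝ (Set.Ici 1) ψ ∧ Tendsto ψ atTop (nhds 0) ∧
  (∀ t ≥ (1:ℝ), t < η t ∧ ψ (η t) = ψ t / 2) ∧
  MonotoneOn (fun t => t / (η t - t)) (Set.Ici 1) ∧
  Tendsto (fun t => t / (η t - t)) atTop atTop

/-!
Write `a k = ψ (3n + k)`; it is nonincreasing because `ψ` is convex with limit `0`, and summable
because `μ → ∞`. Multiplying the tail of `∑ a k cos (θ + k t)` by `2 sin (t/2)` makes it
telescope, and summation by parts gives `|sin (t/2)| |∑_{k ≥ K} a k cos (θ + k t)| ≤ a K`. On `[π/(j+2), π/(j+1)]` Jordan's inequality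
gives `(j+2) sin (t/2) ≥ 1`, hence `|Ψ| ≤ 3 ∑_{k ≤ j} a k` there, and summing over `j` yields
`∫_0^π |Ψ| ≤ 3π ∑ a k / (k+1)`; the reflection `t ↦ 2π - t` turns `[π, 2π]` into `[0, π]`.

For the weighted sum, iterate `η` from `x = 3n`: each step halves `ψ`, and since `μ` is
increasing the `j`-th iterate lies within `(1 + d)^j - 1` of `x`, where
`d = η x - x ≤ 3 (η n - n)`. Cutting `k` into the blocks between consecutive iterates, the
block `j` contributes at most `ψ x 2^{-j} (1 + (j+1) log (1 + d))`, which sums to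
`ψ x (2 + 4 log (1 + d))`.
-/

open Finset

theorem abs_mul_le_of_abs_le_one {a b : ℝ} (ha : 0 ≤ a) (hb : |b| ≤ 1) : |a * b| ≤ a := by
  rw [abs_mul, abs_of_nonneg ha]
  exact mul_le_of_le_one_right ha hb

theorem Summable.mul_of_abs_le_one {a f : ℕ → ℝ} (ha : Summable a) (ha0 : ∀ k, 0 ≤ a k)
    (hf : ∀ k, |f k| ≤ 1) : Summable fun k => a k * f k :=
  ha.of_norm_bounded fun k => abs_mul_le_of_abs_le_one (ha0 k) (hf k)

theorem abs_sin_half_mul_abs_tsum_mul_cos_le {a : ℕ → ℝ} (ha : Antitone a) (hsum : Summable a)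
    (θ t : ℝ) : |sin (t / 2)| * |∑' k : ℕ, a k * cos (θ + k * t)| ≤ a 0 := by
  have ha0 : ∀ k, 0 ≤ a k := ha.le_of_tendsto hsum.tendsto_atTop_zero
  set s : ℕ → ℝ := fun k => sin (θ + k * t - t / 2)
  have hs : ∀ k, |s k| ≤ 1 := fun k => abs_sin_le_one _
  have hcos : ∀ k : ℕ, 2 * sin (t / 2) * cos (θ + k * t) = s (k + 1) - s k := fun k => by
    simp only [s, sin_sub_sin]
    push_cast
    ring_nf
  have hdiff : HasSum (fun k => a k - a (k + 1)) (a 0) := by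
    have := hsum.hasSum.sub ((hasSum_nat_add_iff' 1).2 hsum.hasSum)
    simpa using this
  have hX : Summable fun k => (a k - a (k + 1)) * s (k + 1) :=
    hdiff.summable.mul_of_abs_le_one (fun k => sub_nonneg.2 (ha k.le_succ)) fun k => hs _
  have hg : Summable fun k => a k * s k := hsum.mul_of_abs_le_one ha0 hs
  have htel : HasSum (fun k => a k * s (k + 1) - a k * s k)
      (∑' k, (a k - a (k + 1)) * s (k + 1) - a 0 * s 0) := by
    have := hX.hasSum.add (((hasSum_nat_add_iff' 1).2 hg.hasSum).sub hg.hasSum)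
    convert this using 1
    · ext k; ring
    · rw [sum_range_one]; ring
  have hsin_mul : 2 * sin (t / 2) * ∑' k : ℕ, a k * cos (θ + k * t)
      = ∑' k, (a k - a (k + 1)) * s (k + 1) - a 0 * s 0 := by
    have hterm : (fun k : ℕ => 2 * sin (t / 2) * (a k * cos (θ + k * t)))
        = fun k => a k * s (k + 1) - a k * s k := by
      ext k
      rw [← mul_sub, ← hcos]
      ring
    exact ((hsum.mul_of_abs_le_one ha0 fun k => abs_cos_le_one _).hasSum.mul_left
      (2 * sin (t / 2))).unique (hterm ▸ htel)
  have hXle : |∑' k, (a k - a (k + 1)) * s (k + 1)| ≤ a 0 := by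
    have hterm : ∀ k, |(a k - a (k + 1)) * s (k + 1)| ≤ a k - a (k + 1) := fun k =>
      abs_mul_le_of_abs_le_one (sub_nonneg.2 (ha k.le_succ)) (hs _)
    refine abs_le.2 ⟨?_, hasSum_le (fun k => (abs_le.1 (hterm k)).2) hX.hasSum hdiff⟩
    simpa using hasSum_le (fun k => (abs_le.1 (hterm k)).1) hdiff.neg hX.hasSum
  have := abs_sub (∑' k, (a k - a (k + 1)) * s (k + 1)) (a 0 * s 0)
  rw [← hsin_mul, abs_mul, abs_mul, abs_two] at this
  linarith [abs_mul_le_of_abs_le_one (ha0 0) (hs 0)]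

theorem abs_tsum_mul_cos_le_three_mul_sum {a : ℕ → ℝ} (ha : Antitone a) (hsum : Summable a)
    (θ t : ℝ) {K : ℕ} (hK : 0 < K) (ht : 1 ≤ (K + 1) * sin (t / 2)) :
    |∑' k : ℕ, a k * cos (θ + k * t)| ≤ 3 * ∑ k ∈ range K, a k := by
  have ha0 : ∀ k, 0 ≤ a k := ha.le_of_tendsto hsum.tendsto_atTop_zero
  have hsin : 0 < sin (t / 2) := pos_of_mul_pos_right (one_pos.trans_le ht) (by positivity)
  have htail := abs_sin_half_mul_abs_tsum_mul_cos_le (a := fun k => a (k + K))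
    (fun i j hij => ha (by omega)) ((summable_nat_add_iff K).2 hsum) (θ + K * t) t
  have hshift : ∀ k : ℕ, a (k + K) * cos (θ + ((k + K : ℕ) : ℝ) * t)
      = a (k + K) * cos (θ + K * t + k * t) := fun k => by push_cast; ring_nf
  rw [← (hsum.mul_of_abs_le_one ha0 fun k => abs_cos_le_one _).sum_add_tsum_nat_add K,
    tsum_congr hshift]
  have hhead : |∑ k ∈ range K, a k * cos (θ + k * t)| ≤ ∑ k ∈ range K, a k :=
    (abs_sum_le_sum_abs _ _).trans
      (sum_le_sum fun k _ => abs_mul_le_of_abs_le_one (ha0 k) (abs_cos_le_one _))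
  have hlast : (K + 1) * a K ≤ 2 * ∑ k ∈ range K, a k := by
    have := card_nsmul_le_sum (range K) a (a K) fun k hk => ha (mem_range.1 hk).le
    rw [card_range, nsmul_eq_mul] at this
    have hK1 : (1 : ℝ) ≤ K := by exact_mod_cast hK
    nlinarith [ha0 K]
  have hrest : |∑' k : ℕ, a (k + K) * cos (θ + K * t + k * t)| ≤ (K + 1) * a K := by
    calc _ ≤ (K + 1) * sin (t / 2) * |∑' k : ℕ, a (k + K) * cos (θ + K * t + k * t)| :=
          le_mul_of_one_le_left (abs_nonneg _) ht
      _ ≤ (K + 1) * a K := by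
          rw [mul_assoc]
          gcongr
          simpa [abs_of_pos hsin] using htail
  linarith [abs_add_le (∑ k ∈ range K, a k * cos (θ + k * t))
    (∑' k : ℕ, a (k + K) * cos (θ + K * t + k * t))]

theorem continuous_tsum_mul_cos {a : ℕ → ℝ} (hsum : Summable a) (ν c : ℝ) :
    Continuous fun t => ∑' k : ℕ, a k * cos ((ν + k) * t + c) :=
  continuous_tsum (fun k => by fun_prop) hsum.norm fun k t => by
    rw [norm_mul]
    exact mul_le_of_le_one_right (norm_nonneg _) (abs_cos_le_one _)

theorem sum_range_mul_inv_sub_inv (a : ℕ → ℝ) (m : ℕ) :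
    ∑ j ∈ range m, (∑ k ∈ range (j + 1), a k) * (1 / (j + 1) - 1 / (j + 2))
      = ∑ k ∈ range m, a k / (k + 1) - (∑ k ∈ range m, a k) / (m + 1) := by
  induction m with
  | zero => simp
  | succ m ih =>
    rw [sum_range_succ, ih, sum_range_succ (fun k => a k / (k + 1)), sum_range_succ a]
    push_cast
    ring

theorem integral_abs_tsum_mul_cos_pi_div_le {a : ℕ → ℝ} (ha : Antitone a) (hsum : Summable a)
    (ν c : ℝ) (j : ℕ) :
    ∫ t in π / (j + 2)..π / (j + 1), |∑' k : ℕ, a k * cos ((ν + k) * t + c)|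
      ≤ (π / (j + 1) - π / (j + 2)) * (3 * ∑ k ∈ range (j + 1), a k) := by
  have hj : π / (j + 2) ≤ π / (j + 1) :=
    div_le_div_of_nonneg_left pi_pos.le (by positivity) (by linarith)
  have hbound : ∀ t ∈ Set.uIoc (π / (j + 2)) (π / (j + 1)),
      ‖|∑' k : ℕ, a k * cos ((ν + k) * t + c)|‖ ≤ 3 * ∑ k ∈ range (j + 1), a k := by
    rintro t ⟨ht1, ht2⟩
    rw [min_eq_left hj] at ht1
    rw [max_eq_right hj] at ht2
    have ht0 : 0 < t := (by positivity : 0 < π / (j + 2)).trans ht1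
    have htπ : t ≤ π := ht2.trans (div_le_self pi_pos.le (by linarith))
    have hjordan : t / π ≤ sin (t / 2) := by
      have := mul_le_sin (x := t / 2) (by linarith) (by linarith)
      rwa [show 2 / π * (t / 2) = t / π by ring] at this
    have hsin : 1 ≤ (((j + 1 : ℕ) : ℝ) + 1) * sin (t / 2) := by
      rw [div_lt_iff₀ (by positivity)] at ht1
      have h1 : 1 < (j + 2) * (t / π) := by
        rw [mul_div_assoc', one_lt_div pi_pos]
        linarith
      push_cast
      nlinarith
    have hterm : ∀ k : ℕ, a k * cos ((ν + k) * t + c) = a k * cos ((ν * t + c) + k * t) :=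
      fun k => by ring_nf
    rw [norm_eq_abs, abs_abs, tsum_congr hterm]
    exact abs_tsum_mul_cos_le_three_mul_sum ha hsum _ t j.succ_pos hsin
  calc _ ≤ ‖∫ t in π / (j + 2)..π / (j + 1), |∑' k : ℕ, a k * cos ((ν + k) * t + c)|‖ :=
        le_abs_self _
    _ ≤ 3 * (∑ k ∈ range (j + 1), a k) * |π / (j + 1) - π / (j + 2)| :=
        intervalIntegral.norm_integral_le_of_norm_le_const hbound
    _ = _ := by
        rw [abs_of_nonneg (sub_nonneg.2 hj)]
        ring

theorem integral_zero_eq_add_sum_integral_div {f : ℝ → ℝ} (hf : Continuous f) (b : ℝ) (m : ℕ) :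
    ∫ t in (0:ℝ)..b, f t
      = (∫ t in (0:ℝ)..b / (m + 1), f t) + ∑ j ∈ range m, ∫ t in b / (j + 2)..b / (j + 1), f t := by
  have hadj := intervalIntegral.sum_integral_adjacent_intervals (f := f) (μ := volume)
    (a := fun j : ℕ => b / (j + 1)) (n := m) fun k _ => hf.intervalIntegrable _ _
  simp only [Nat.cast_zero, zero_add, div_one] at hadj
  rw [← intervalIntegral.integral_add_adjacent_intervals
    (hf.intervalIntegrable 0 (b / (m + 1))) (hf.intervalIntegrable _ b),
    intervalIntegral.integral_symm b (b / (m + 1)), ← hadj, ← sum_neg_distrib]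
  congr 1
  refine sum_congr rfl fun j _ => ?_
  rw [intervalIntegral.integral_symm, neg_neg]
  push_cast
  ring_nf

theorem integral_abs_tsum_mul_cos_le {a : ℕ → ℝ} (ha : Antitone a) (hsum : Summable a)
    (ν c : ℝ) :
    ∫ t in (0:ℝ)..π, |∑' k : ℕ, a k * cos ((ν + k) * t + c)|
      ≤ 3 * π * ∑' k : ℕ, a k / (k + 1) := by
  have ha0 : ∀ k, 0 ≤ a k := ha.le_of_tendsto hsum.tendsto_atTop_zero
  set f := fun t => |∑' k : ℕ, a k * cos ((ν + k) * t + c)|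
  set S := ∑' k : ℕ, a k / (k + 1)
  have hf : Continuous f := (continuous_tsum_mul_cos hsum ν c).abs
  have hS : Summable fun k : ℕ => a k / (k + 1) :=
    hsum.of_nonneg_of_le (fun k => div_nonneg (ha0 k) (by positivity)) fun k =>
      div_le_self (ha0 k) (by linarith [k.cast_nonneg (α := ℝ)])
  have hfB : ∀ t, ‖f t‖ ≤ ∑' k, a k := fun t => by
    rw [norm_eq_abs, abs_abs, ← norm_eq_abs]
    exact tsum_of_norm_bounded hsum.hasSum fun k =>
      abs_mul_le_of_abs_le_one (ha0 k) (abs_cos_le_one _)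
  have hm : ∀ m : ℕ, ∫ t in (0:ℝ)..π, f t ≤ (∑' k, a k) * π * (1 / (m + 1)) + 3 * π * S := by
    intro m
    have hsmall : ∫ t in (0:ℝ)..π / (m + 1), f t ≤ (∑' k, a k) * π * (1 / (m + 1)) := by
      refine (le_abs_self _).trans ((intervalIntegral.norm_integral_le_of_norm_le_const
        fun t _ => hfB t).trans_eq ?_)
      rw [sub_zero, abs_of_pos (by positivity)]
      ring
    have hpieces : ∑ j ∈ range m, ∫ t in π / (j + 2)..π / (j + 1), f t ≤ 3 * π * S :=
      calc _ ≤ ∑ j ∈ range m, (π / (j + 1) - π / (j + 2)) * (3 * ∑ k ∈ range (j + 1), a k) :=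
            sum_le_sum fun j _ => integral_abs_tsum_mul_cos_pi_div_le ha hsum ν c j
        _ = 3 * π * ∑ j ∈ range m,
              (∑ k ∈ range (j + 1), a k) * (1 / (j + 1) - 1 / (j + 2)) := by
            rw [mul_sum]
            exact sum_congr rfl fun j _ => by ring
        _ ≤ 3 * π * S := by
            rw [sum_range_mul_inv_sub_inv]
            have : 0 ≤ (∑ k ∈ range m, a k) / (m + 1) := by
              have := sum_nonneg fun k (_ : k ∈ range m) => ha0 k
              positivity
            have := hS.sum_le_tsum (range m) fun k _ => div_nonneg (ha0 k) (by positivity)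
            gcongr
            linarith
    linarith [integral_zero_eq_add_sum_integral_div hf π m]
  have hlim : Tendsto (fun m : ℕ => (∑' k, a k) * π * (1 / ((m : ℝ) + 1)) + 3 * π * S) atTop
      (nhds (3 * π * S)) := by
    simpa using (tendsto_one_div_add_atTop_nhds_zero_nat.const_mul ((∑' k, a k) * π)).add_const
      (3 * π * S)
  exact ge_of_tendsto' hlim hm

theorem integral_two_pi_abs_tsum_mul_cos_eq {a : ℕ → ℝ} (hsum : Summable a) (n : ℕ) (c : ℝ) :
    ∫ t in (0:ℝ)..2 * π, |∑' k : ℕ, a k * cos ((n + k) * t + c)|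
      = (∫ t in (0:ℝ)..π, |∑' k : ℕ, a k * cos ((n + k) * t + c)|)
        + ∫ t in (0:ℝ)..π, |∑' k : ℕ, a k * cos ((n + k) * t + -c)| := by
  have hf := (continuous_tsum_mul_cos hsum n c).abs
  rw [← intervalIntegral.integral_add_adjacent_intervals (hf.intervalIntegrable 0 π)
    (hf.intervalIntegrable π (2 * π))]
  congr 1
  have hrefl : ∀ t, ∑' k : ℕ, a k * cos ((n + k) * (2 * π - t) + c)
      = ∑' k : ℕ, a k * cos ((n + k) * t + -c) := fun t => tsum_congr fun k => by
    rw [show ((n : ℝ) + k) * (2 * π - t) + c = ((n + k : ℕ) : ℝ) * (2 * π) - ((n + k) * t + -c)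
      by push_cast; ring, cos_nat_mul_two_pi_sub]
  have := intervalIntegral.integral_comp_sub_left
    (fun t => |∑' k : ℕ, a k * cos ((n + k) * t + c)|) (2 * π) (a := 0) (b := π)
  simp only [hrefl, sub_zero] at this
  rw [this, show 2 * π - π = π by ring]

theorem ConvexOn.antitoneOn_of_tendsto {f : ℝ → ℝ} {a l : ℝ} (hf : ConvexOn ℝ (Set.Ici a) f)
    (hl : Tendsto f atTop (nhds l)) : AntitoneOn f (Set.Ici a) := by
  intro s hs t ht hst
  by_contra! hlt
  have hst' : s < t := hst.lt_of_ne (by rintro rfl; exact lt_irrefl _ hlt)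
  set c := (f t - f s) / (t - s)
  have hc : 0 < c := div_pos (by linarith) (by linarith)
  have hline : ∀ u, t < u → f t + c * (u - t) ≤ f u := fun u hu => by
    have := hf.slope_mono_adjacent hs (le_trans ht hu.le : a ≤ u) hst' hu
    rw [le_div_iff₀ (by linarith)] at this
    linarith
  have hline_top : Tendsto (fun u => f t + c * (u - t)) atTop atTop :=
    tendsto_atTop_add_const_left _ _
      ((tendsto_id.atTop_add tendsto_const_nhds).const_mul_atTop hc)
  exact not_tendsto_nhds_of_tendsto_atTop
    (tendsto_atTop_mono' _ ((eventually_gt_atTop t).mono hline) hline_top) l hl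

theorem AntitoneOn.antitone_nat_add {f : ℝ → ℝ} {a x : ℝ} (hf : AntitoneOn f (Set.Ici a))
    (hx : a ≤ x) : Antitone fun k : ℕ => f (x + k) := fun i j hij =>
  hf (by simp only [Set.mem_Ici]; linarith [i.cast_nonneg (α := ℝ)])
    (by simp only [Set.mem_Ici]; linarith [j.cast_nonneg (α := ℝ)]) (by gcongr)

-- `(η x - x) / x = 1 / μ x`, so this is `μ x ≤ μ t` rearranged.
theorem eta_sub_le {η : ℝ → ℝ} (hlt : ∀ t ≥ (1:ℝ), t < η t)
    (hμ : MonotoneOn (fun t => t / (η t - t)) (Set.Ici 1)) {x t : ℝ} (hx : 1 ≤ x)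
    (hxt : x ≤ t) : η t - t ≤ t * ((η x - x) / x) := by
  have hμxt : x / (η x - x) ≤ t / (η t - t) := hμ hx (hx.trans hxt) hxt
  rw [div_le_div_iff₀ (by linarith [hlt x hx]) (by linarith [hlt t (hx.trans hxt)])] at hμxt
  rw [mul_div_assoc', le_div_iff₀ (by linarith)]
  linarith

theorem iterate_eta_spec {ψ η : ℝ → ℝ} (hη : ∀ t ≥ (1:ℝ), t < η t ∧ ψ (η t) = ψ t / 2)
    (hμ : MonotoneOn (fun t => t / (η t - t)) (Set.Ici 1)) {x : ℝ} (hx : 1 ≤ x) (j : ℕ) :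
    x ≤ η^[j] x ∧ ψ (η^[j] x) = ψ x / 2 ^ j ∧ η^[j] x ≤ x * (1 + (η x - x) / x) ^ j := by
  induction j with
  | zero => simp
  | succ j ih =>
    obtain ⟨hxT, hψT, hTle⟩ := ih
    have hηT := hη _ (hx.trans hxT)
    have hstep := eta_sub_le (fun t ht => (hη t ht).1) hμ hx hxT
    have hr : 0 ≤ 1 + (η x - x) / x := by
      have := (hη x hx).1
      positivity
    rw [Function.iterate_succ_apply']
    refine ⟨by linarith [hηT.1], by rw [hηT.2, hψT, pow_succ]; ring, ?_⟩
    calc η (η^[j] x) ≤ η^[j] x * (1 + (η x - x) / x) := by linarith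
      _ ≤ x * (1 + (η x - x) / x) ^ j * (1 + (η x - x) / x) := by gcongr
      _ = x * (1 + (η x - x) / x) ^ (j + 1) := by ring

theorem mul_pow_sub_one_le {x r : ℝ} (hx : 1 ≤ x) (hr : 0 ≤ r) (j : ℕ) :
    x * ((1 + r) ^ j - 1) ≤ (1 + x * r) ^ j - 1 := by
  induction j with
  | zero => simp
  | succ j ih =>
    have h1 : 1 ≤ (1 + x * r) ^ j := one_le_pow₀ (by nlinarith)
    have h2 : r ≤ x * r := by nlinarith
    calc x * ((1 + r) ^ (j + 1) - 1) = x * ((1 + r) ^ j - 1) * (1 + r) + x * r := by ring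
      _ ≤ ((1 + x * r) ^ j - 1) * (1 + x * r) + x * r := by gcongr
      _ = (1 + x * r) ^ (j + 1) - 1 := by ring

theorem exists_halving_blocks {ψ η : ℝ → ℝ} (hpos : ∀ t ≥ (1:ℝ), 0 < ψ t)
    (hanti : AntitoneOn ψ (Set.Ici 1)) (hη : ∀ t ≥ (1:ℝ), t < η t ∧ ψ (η t) = ψ t / 2)
    (hμ : MonotoneOn (fun t => t / (η t - t)) (Set.Ici 1)) {x : ℝ} (hx : 1 ≤ x) :
    ∃ N : ℕ → ℕ, Monotone N ∧ N 0 = 0 ∧ (∀ m, ∃ j, m ≤ N j) ∧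
      (∀ j, (N j : ℝ) ≤ x * (1 + (η x - x) / x) ^ j - x + 1) ∧
      ∀ j k, N j ≤ k → ψ (x + k) ≤ ψ x / 2 ^ j := by
  have hT := iterate_eta_spec hη hμ hx
  have hdecay : ∀ j (y : ℝ), η^[j] x ≤ y → ψ y ≤ ψ x / 2 ^ j := fun j y hy =>
    (hT j).2.1 ▸ hanti (hx.trans (hT j).1) (hx.trans ((hT j).1.trans hy)) hy
  have hceil : ∀ j (k : ℕ), ⌈η^[j] x - x⌉₊ ≤ k → η^[j] x ≤ x + k := fun j k hk => by
    have := (Nat.ceil_le).1 hk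
    linarith
  refine ⟨fun j => ⌈η^[j] x - x⌉₊, monotone_nat_of_le_succ fun j => ?_, by simp,
    fun m => ?_, fun j => ?_, fun j k hk => hdecay j _ (hceil j k hk)⟩
  · refine Nat.ceil_mono (sub_le_sub_right ?_ x)
    rw [Function.iterate_succ_apply']
    exact (hη _ (hx.trans (hT j).1)).1.le
  · have hψm := hpos (x + m) (by linarith [m.cast_nonneg (α := ℝ)])
    obtain ⟨J, hJ⟩ := exists_pow_lt_of_lt_one (div_pos hψm (hpos x hx)) one_half_lt_one
    refine ⟨J, not_lt.1 fun hlt => ?_⟩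
    have := hdecay J _ (hceil J m hlt.le)
    rw [lt_div_iff₀ (hpos x hx), one_div_pow, one_div_mul_eq_div] at hJ
    linarith
  · have := Nat.ceil_lt_add_one (sub_nonneg.2 (hT j).1)
    linarith [(hT j).2.2]

theorem sum_range_le_tsum_of_blocks {b c : ℕ → ℝ} {N : ℕ → ℕ} (hb : ∀ k, 0 ≤ b k)
    (hN : Monotone N) (hN0 : N 0 = 0) (hNtop : ∀ m, ∃ j, m ≤ N j) (hc : Summable c)
    (hbc : ∀ j, ∑ k ∈ Ico (N j) (N (j + 1)), b k ≤ c j) (m : ℕ) :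
    ∑ k ∈ range m, b k ≤ ∑' j, c j := by
  have hsplit : ∀ J,
      ∑ k ∈ range (N J), b k = ∑ j ∈ range J, ∑ k ∈ Ico (N j) (N (j + 1)), b k := by
    intro J
    induction J with
    | zero => simp [hN0]
    | succ J ih => rw [sum_range_succ, ← ih, sum_range_add_sum_Ico _ (hN J.le_succ)]
  obtain ⟨J, hJ⟩ := hNtop m
  calc ∑ k ∈ range m, b k ≤ ∑ k ∈ range (N J), b k :=
        sum_le_sum_of_subset_of_nonneg (range_subset_range.2 hJ) fun k _ _ => hb k
    _ ≤ ∑ j ∈ range J, c j := hsplit J ▸ sum_le_sum fun j _ => hbc j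
    _ ≤ ∑' j, c j := hc.sum_le_tsum _ fun j _ => (sum_nonneg fun k _ => hb k).trans (hbc j)

theorem summable_nat_add_of_halving {ψ η : ℝ → ℝ} (hpos : ∀ t ≥ (1:ℝ), 0 < ψ t)
    (hanti : AntitoneOn ψ (Set.Ici 1)) (hη : ∀ t ≥ (1:ℝ), t < η t ∧ ψ (η t) = ψ t / 2)
    (hμ : MonotoneOn (fun t => t / (η t - t)) (Set.Ici 1))
    (hμtop : Tendsto (fun t => t / (η t - t)) atTop atTop) {y : ℝ} (hy : 1 ≤ y) :
    Summable fun k : ℕ => ψ (y + k) := by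
  obtain ⟨x, hμx, hx⟩ := ((hμtop.eventually_ge_atTop 2).and (eventually_ge_atTop 1)).exists
  have hd := (hη x hx).1
  rw [le_div_iff₀ (by linarith)] at hμx
  have hr : (η x - x) / x ≤ 1 / 2 := by
    rw [div_le_iff₀ (by linarith)]
    linarith
  have hr0 : 0 ≤ (η x - x) / x := div_nonneg (by linarith) (by linarith)
  obtain ⟨N, hN, hN0, hNtop, hNle, hdecay⟩ := exists_halving_blocks hpos hanti hη hμ hx
  have hx_le : ∀ k : ℕ, 1 ≤ x + k := fun k => by linarith [k.cast_nonneg (α := ℝ)]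
  -- `μ x ≥ 2` makes the block lengths grow like `(3/2)^j`, slower than the `2^j` decay of `ψ`
  have hblock : ∀ j,
      ∑ k ∈ Ico (N j) (N (j + 1)), ψ (x + k) ≤ 3 / 2 * x * ψ x * (3 / 4) ^ j := by
    intro j
    have hlen : ((N (j + 1) - N j : ℕ) : ℝ) ≤ x * (3 / 2) ^ (j + 1) := by
      have := hNle (j + 1)
      have : (1 + (η x - x) / x) ^ (j + 1) ≤ (3 / 2) ^ (j + 1) := by gcongr; linarith
      push_cast [hN j.le_succ]
      nlinarith [(N j).cast_nonneg (α := ℝ)]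
    calc ∑ k ∈ Ico (N j) (N (j + 1)), ψ (x + k) ≤ (N (j + 1) - N j) • (ψ x / 2 ^ j) := by
          simpa using sum_le_card_nsmul _ _ _ fun k hk => hdecay j k (mem_Ico.1 hk).1
      _ ≤ x * (3 / 2) ^ (j + 1) * (ψ x / 2 ^ j) := by
          rw [nsmul_eq_mul]
          gcongr
          exact div_nonneg (hpos x hx).le (by positivity)
      _ = 3 / 2 * x * ψ x * (3 / 4) ^ j := by
          rw [show (3 / 4 : ℝ) ^ j = (3 / 2) ^ j / 2 ^ j by rw [← div_pow]; norm_num]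
          ring
  have hx_summable : Summable fun k : ℕ => ψ (x + k) :=
    summable_of_sum_range_le (fun k => (hpos _ (hx_le k)).le)
      (sum_range_le_tsum_of_blocks (fun k => (hpos _ (hx_le k)).le) hN hN0 hNtop
        ((summable_geometric_of_lt_one (by norm_num) (by norm_num)).mul_left _) hblock)
  rw [← summable_nat_add_iff ⌈x⌉₊]
  have hshift : ∀ k : ℕ, x + k ≤ y + (k + ⌈x⌉₊ : ℕ) := fun k => by
    push_cast
    linarith [Nat.le_ceil x]
  exact hx_summable.of_nonneg_of_le (fun k => (hpos _ ((hx_le k).trans (hshift k))).le)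
    fun k => hanti (hx_le k) ((hx_le k).trans (hshift k)) (hshift k)

theorem sum_range_inv_succ_le_one_add_log {N : ℕ} {y : ℝ} (hy : 1 ≤ y) (hN : (N : ℝ) ≤ y) :
    ∑ k ∈ range N, 1 / ((k : ℝ) + 1) ≤ 1 + log y := by
  have hH := harmonic_le_one_add_log N
  simp only [harmonic] at hH
  push_cast at hH
  have hlog : log N ≤ log y := by
    rcases N.eq_zero_or_pos with rfl | hN0
    · simpa using log_nonneg hy
    · exact log_le_log (by exact_mod_cast hN0) hN
  simp only [one_div]
  linarith

theorem hasSum_one_add_succ_mul_half_pow (ℓ : ℝ) :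
    HasSum (fun j : ℕ => (1 + (j + 1) * ℓ) * (1 / 2) ^ j) (2 + 4 * ℓ) := by
  have h := (hasSum_geometric_two.mul_left (1 + ℓ)).add
    ((hasSum_coe_mul_geometric_of_norm_lt_one (𝕜 := ℝ) (r := 1 / 2) (by norm_num)).mul_left ℓ)
  rw [show (1 + ℓ) * 2 + ℓ * (1 / 2 / (1 - 1 / 2) ^ 2) = 2 + 4 * ℓ by norm_num; ring] at h
  exact h.congr_fun fun j => by ring

theorem tsum_div_succ_le_mul_log {ψ η : ℝ → ℝ} (hpos : ∀ t ≥ (1:ℝ), 0 < ψ t)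
    (hanti : AntitoneOn ψ (Set.Ici 1)) (hη : ∀ t ≥ (1:ℝ), t < η t ∧ ψ (η t) = ψ t / 2)
    (hμ : MonotoneOn (fun t => t / (η t - t)) (Set.Ici 1)) {x : ℝ} (hx : 1 ≤ x) :
    ∑' k : ℕ, ψ (x + k) / (k + 1) ≤ ψ x * (2 + 4 * log (1 + (η x - x))) := by
  obtain ⟨N, hN, hN0, hNtop, hNle, hdecay⟩ := exists_halving_blocks hpos hanti hη hμ hx
  set ℓ := log (1 + (η x - x))
  have hd : 0 ≤ η x - x := by linarith [(hη x hx).1]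
  have hNpow : ∀ j, (N j : ℝ) ≤ (1 + (η x - x)) ^ j := fun j => by
    have := mul_pow_sub_one_le hx (div_nonneg hd (by linarith : (0:ℝ) ≤ x)) j
    rw [mul_div_cancel₀ _ (by linarith : x ≠ 0)] at this
    linarith [hNle j]
  have hc := (hasSum_one_add_succ_mul_half_pow ℓ).mul_left (ψ x)
  have hterm : ∀ k : ℕ, 0 ≤ ψ (x + k) / (k + 1) := fun k =>
    div_nonneg (hpos _ (by linarith [k.cast_nonneg (α := ℝ)])).le (by positivity)
  refine Real.tsum_le_of_sum_range_le hterm fun m =>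
    (sum_range_le_tsum_of_blocks hterm hN hN0 hNtop hc.summable (fun j => ?_) m).trans
      hc.tsum_eq.le
  have hH : ∑ k ∈ range (N (j + 1)), 1 / ((k : ℝ) + 1) ≤ 1 + (j + 1) * ℓ := by
    have := sum_range_inv_succ_le_one_add_log (one_le_pow₀ (by linarith)) (hNpow (j + 1))
    rwa [log_pow, Nat.cast_succ] at this
  have hweight : 0 ≤ ψ x / 2 ^ j := div_nonneg (hpos x hx).le (by positivity)
  calc ∑ k ∈ Ico (N j) (N (j + 1)), ψ (x + k) / (k + 1)
      ≤ ∑ k ∈ Ico (N j) (N (j + 1)), ψ x / 2 ^ j * (1 / ((k : ℝ) + 1)) :=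
        sum_le_sum fun k hk => by
          rw [mul_one_div]
          gcongr
          exact hdecay j k (mem_Ico.1 hk).1
    _ ≤ ψ x / 2 ^ j * ∑ k ∈ range (N (j + 1)), 1 / ((k : ℝ) + 1) := by
        rw [← mul_sum, range_eq_Ico]
        exact mul_le_mul_of_nonneg_left (sum_le_sum_of_subset_of_nonneg
          (Ico_subset_Ico_left (Nat.zero_le _)) fun k _ _ => by positivity) hweight
    _ ≤ ψ x / 2 ^ j * (1 + (j + 1) * ℓ) := mul_le_mul_of_nonneg_left hH hweight
    _ = ψ x * ((1 + (j + 1) * ℓ) * (1 / 2) ^ j) := by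
        rw [one_div_pow]
        ring

theorem log_one_add_le_of_le_three_mul {d h : ℝ} (hd : 0 ≤ d) (hdh : d ≤ 3 * h) :
    log (1 + d) ≤ 3 + log⁺ h := by
  calc log (1 + d) = log⁺ (1 + d) := (posLog_eq_log (by rw [abs_of_nonneg] <;> linarith)).symm
    _ ≤ log 2 + log⁺ 1 + log⁺ d := posLog_add
    _ ≤ log 2 + log⁺ (3 * h) := by
        rw [posLog_one, add_zero]
        gcongr
    _ ≤ log 2 + (log 3 + log⁺ h) := by
        gcongr
        exact_mod_cast posLog_nat_mul (n := 3) (x := h)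
    _ ≤ 3 + log⁺ h := by
        linarith [log_le_sub_one_of_pos (two_pos (α := ℝ)),
          log_le_sub_one_of_pos (three_pos (α := ℝ))]

theorem tsum_div_succ_le_posLog {ψ η : ℝ → ℝ} (hpos : ∀ t ≥ (1:ℝ), 0 < ψ t)
    (hanti : AntitoneOn ψ (Set.Ici 1)) (hη : ∀ t ≥ (1:ℝ), t < η t ∧ ψ (η t) = ψ t / 2)
    (hμ : MonotoneOn (fun t => t / (η t - t)) (Set.Ici 1)) {n : ℝ} (hn : 1 ≤ n) :
    ∑' k : ℕ, ψ (3 * n + k) / (k + 1) ≤ 14 * ψ (3 * n) * (1 + log⁺ (η n - n)) := by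
  have hx : 1 ≤ 3 * n := by linarith
  have hd : η (3 * n) - 3 * n ≤ 3 * (η n - n) := by
    have := eta_sub_le (fun t ht => (hη t ht).1) hμ hn (by linarith : n ≤ 3 * n)
    rwa [mul_div_assoc', mul_div_right_comm, mul_div_cancel_right₀ _ (by linarith)] at this
  have hlog := log_one_add_le_of_le_three_mul (by linarith [(hη _ hx).1]) hd
  calc _ ≤ ψ (3 * n) * (2 + 4 * log (1 + (η (3 * n) - 3 * n))) :=
        tsum_div_succ_le_mul_log hpos hanti hη hμ hx
    _ ≤ ψ (3 * n) * (14 + 14 * log⁺ (η n - n)) :=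
        mul_le_mul_of_nonneg_left (by linarith [posLog_nonneg (x := η n - n)]) (hpos _ hx).le
    _ = 14 * ψ (3 * n) * (1 + log⁺ (η n - n)) := by ring

/-- Estimate (83): there is an absolute constant `C > 0` such that for every
`ψ ∈ 𝔐_∞^+`, `β ∈ ℝ` and `n ∈ ℕ`, the kernel
`Ψ_{n,β}(t) = ∑_{k=n}^∞ ψ(2n+k) cos(kt + βπ/2)` satisfies
`∫_0^{2π} |Ψ_{n,β}(t)| dt ≤ C ψ(3n)(1 + ln⁺(η(n) − n))`. -/
theorem statement18 :
    ∃ C : ℝ, 0 < C ∧ ∀ ψ η : ℝ → ℝ, IsMInfPlus ψ η → ∀ β : ℝ, ∀ n : ℕ, 1 ≤ n →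
      (∫ t in (0:ℝ)..(2 * π),
          |∑' k : ℕ, ψ (3 * (n : ℝ) + k) * Real.cos (((n : ℝ) + k) * t + β * π / 2)|) ≤
        C * ψ (3 * n) * (1 + max 0 (Real.log (η n - n))) := by
  refine ⟨84 * π, by positivity, ?_⟩
  rintro ψ η ⟨hpos, -, hconv, hlim, hη, hμ, hμtop⟩ β n hn
  have hanti := hconv.antitoneOn_of_tendsto hlim
  have hn1 : (1 : ℝ) ≤ n := by exact_mod_cast hn
  have hx : (1 : ℝ) ≤ 3 * n := by linarith
  have ha := hanti.antitone_nat_add hx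
  have hsum := summable_nat_add_of_halving hpos hanti hη hμ hμtop hx
  have h₁ := integral_abs_tsum_mul_cos_le ha hsum n (β * π / 2)
  have h₂ := integral_abs_tsum_mul_cos_le ha hsum n (-(β * π / 2))
  have hS := tsum_div_succ_le_posLog hpos hanti hη hμ hn1
  rw [integral_two_pi_abs_tsum_mul_cos_eq hsum]
  calc _ ≤ 6 * π * ∑' k : ℕ, ψ (3 * n + k) / (k + 1) := by linarith
    _ ≤ 6 * π * (14 * ψ (3 * n) * (1 + log⁺ (η n - n))) := by gcongr
    _ = 84 * π * ψ (3 * n) * (1 + max 0 (log (η n - n))) := by rw [posLog_apply]; ring
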